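/- Let (E,F) be a uniformly self-similar ends space and let H be a half-space of (E,F). Then Homeo(E,F) is the normal closure of the subgroup of those homeomorphisms in Homeo(E,F) that are supported on H; moreover, every element of Homeo(E,F) is a product of at most 3 elements, each of which is a conjugate in Homeo(E,F) of a homeomorphism supported on H. -/

import Mathlib

section EndsSpace

variable {E : Type*} [TopologicalSpace E]

/-- A homeomorphism of pairs from `(A, A ∩ F)` to `(B, B ∩ F)`:
a homeomorphism of the subspaces `A → B` carrying `A ∩ F` onto `B ∩ F`. -/
def PairHomeo (F A B : Set E) : Prop :=
  ∃ h : A ≃ₜ B, ∀ x : A, ((h x : E) ∈ F ↔ (x : E) ∈ F)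

/-- `(E, F)` is self-similar: every partition of `E` into finitely many pairwise
disjoint nonempty clopen sets has a piece containing a clopen set `D` with
`(D, D ∩ F)` homeomorphic (as a pair) to `(E, F)`. -/
def SelfSimilarPair (F : Set E) : Prop :=
  ∀ (n : ℕ) (P : Fin n → Set E),
    (∀ i, IsClopen (P i)) → (∀ i, (P i).Nonempty) →
    Pairwise (Function.onFun Disjoint P) → (⋃ i, P i) = Set.univ →
    ∃ i, ∃ D : Set E, IsClopen D ∧ D ⊆ P i ∧ PairHomeo F D Set.univ

/-- The preorder `x ≼ y` on ends: every clopen neighborhood `U` of `y` contains a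
clopen set `D` for which there are a clopen neighborhood `V` of `x` and a
homeomorphism of pairs `(V, V ∩ F) → (D, D ∩ F)`. -/
def EndsLE (F : Set E) (x y : E) : Prop :=
  ∀ U : Set E, IsClopen U → y ∈ U →
    ∃ D : Set E, D ⊆ U ∧ IsClopen D ∧
      ∃ V : Set E, IsClopen V ∧ x ∈ V ∧ PairHomeo F V D

/-- The equivalence `x ∼ y`: `x ≼ y` and `y ≼ x`. -/
def EndsEquiv (F : Set E) (x y : E) : Prop := EndsLE F x y ∧ EndsLE F y x

/-- `x` is a maximal end. -/
def MaximalEnd (F : Set E) (x : E) : Prop := ∀ y, EndsLE F x y → EndsLE F y x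

/-- `M(E)`, the set of maximal ends. -/
def MaxSet (F : Set E) : Set E := {x | MaximalEnd F x}

/-- `(E, F)` is uniformly self-similar: it is self-similar, `M(E)` is a single
`∼`-equivalence class, and `M(E)` is homeomorphic to the Cantor space `ℕ → Bool`. -/
def UniformlySelfSimilar (F : Set E) : Prop :=
  SelfSimilarPair F ∧
  (∃ x, MaxSet F = {y | EndsEquiv F x y}) ∧
  Nonempty (↥(MaxSet F) ≃ₜ (ℕ → Bool))

/-- The group `Homeo(E,F)` of homeomorphisms of `E` preserving `F`,
as a subgroup of the permutation group of `E`. -/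
def EndsHomeo (F : Set E) : Subgroup (Equiv.Perm E) where
  carrier := {h | Continuous h ∧ Continuous h.symm ∧ ∀ x, h x ∈ F ↔ x ∈ F}
  one_mem' := ⟨continuous_id, continuous_id, fun _ => Iff.rfl⟩
  mul_mem' := by
    rintro a b ⟨ha1, ha2, ha3⟩ ⟨hb1, hb2, hb3⟩
    refine ⟨?_, ?_, fun x => ?_⟩
    · exact ha1.comp hb1
    · exact hb2.comp ha2
    · exact (ha3 (b x)).trans (hb3 x)
  inv_mem' := by
    rintro a ⟨ha1, ha2, ha3⟩
    refine ⟨ha2, ha1, fun x => ?_⟩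
    have h := ha3 (a⁻¹ x)
    rw [show a (a⁻¹ x) = x from (Equiv.eq_symm_apply a).mp rfl] at h
    exact h.symm

/-- A half-space of `(E,F)`: a clopen set meeting `M(E)` in a nonempty proper subset. -/
def IsHalfSpace (F H : Set E) : Prop :=
  IsClopen H ∧ (H ∩ MaxSet F).Nonempty ∧ H ∩ MaxSet F ⊂ MaxSet F

/-- `φ` is an `H`-translation: the sets `φⁿ(H)`, `n ∈ ℤ`, are pairwise disjoint. -/
def IsHTranslation (H : Set E) (φ : Equiv.Perm E) : Prop :=
  ∀ m n : ℤ, m ≠ n → Disjoint ((φ ^ m) '' H) ((φ ^ n) '' H)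

/-- A homeomorphism is supported on `H` if it fixes every point outside `H`. -/
def SupportedOn (H : Set E) (h : Equiv.Perm E) : Prop := ∀ x ∉ H, h x = x

end EndsSpace

/-!
Self-similarity and compactness give a point every clopen neighbourhood of which contains a
clopen copy of `(E, F)`; such a point dominates every end, so, `M(E)` being one `∼`-class, every
maximal end has this property. Given `g`, pick a maximal end `q ∈ H`. As `M(E)` is a Cantor set,
`H` contains two more maximal ends away from `q` and `g q`; take disjoint clopen neighbourhoods
`P₁, P₂ ⊆ H` of them, and a clopen neighbourhood `W ⊆ H` of `q` with `W` and `g W` disjoint from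
`P₁ ∪ P₂`. Swapping `W` with a copy of it inside `P₁`, and then that copy with `g W`, gives `c`
agreeing with `g` on `W` and fixing `P₂`, so `c⁻¹ g` fixes `W`; an element
fixing a region of `H` that contains a copy of `(E, F)` is conjugated into the homeomorphisms
supported on `H` by a swap carrying `Hᶜ` into that region. Thus `g = c (c⁻¹ g)` is a product of
two conjugates of homeomorphisms supported on `H`.
-/

open Set Topology

section PairHomeo

variable {E : Type*} [TopologicalSpace E] {F : Set E}

theorem PairHomeo.symm {A B : Set E} (h : PairHomeo F A B) : PairHomeo F B A := by
  obtain ⟨e, he⟩ := h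
  exact ⟨e.symm, fun y => by simpa using (he (e.symm y)).symm⟩

theorem PairHomeo.trans {A B C : Set E} (hAB : PairHomeo F A B) (hBC : PairHomeo F B C) :
    PairHomeo F A C := by
  obtain ⟨e₁, he₁⟩ := hAB
  obtain ⟨e₂, he₂⟩ := hBC
  exact ⟨e₁.trans e₂, fun x => (he₂ (e₁ x)).trans (he₁ x)⟩

theorem PairHomeo.exists_clopen_copy_of_subset {V D S : Set E} (h : PairHomeo F V D)
    (hD : IsClopen D) (hS : IsClopen S) (hSV : S ⊆ V) :
    ∃ T ⊆ D, IsClopen T ∧ PairHomeo F S T := by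
  obtain ⟨e, he⟩ := h
  let f : S → E := Subtype.val ∘ e ∘ inclusion hSV
  have hopen : IsOpenEmbedding f :=
    hD.isOpen.isOpenEmbedding_subtypeVal.comp <| e.isOpenEmbedding.comp <|
      .inclusion hSV (hS.isOpen.preimage continuous_subtype_val)
  have hclosed : IsClosedEmbedding f :=
    hD.isClosed.isClosedEmbedding_subtypeVal.comp <| e.isClosedEmbedding.comp <|
      .inclusion hSV (hS.isClosed.preimage continuous_subtype_val)
  refine ⟨range f, ?_, ⟨hclosed.isClosed_range, hopen.isOpen_range⟩,
    hopen.toIsEmbedding.toHomeomorph, fun x => he (inclusion hSV x)⟩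
  rintro _ ⟨x, rfl⟩
  exact (e _).2

end PairHomeo

section Copies

variable {E : Type*} [TopologicalSpace E] {F : Set E}

def ContainsCopy (F U : Set E) : Prop := ∃ D ⊆ U, IsClopen D ∧ PairHomeo F D univ

theorem ContainsCopy.exists_copy {U A : Set E} (hU : ContainsCopy F U) (hA : IsClopen A) :
    ∃ T ⊆ U, IsClopen T ∧ PairHomeo F A T := by
  obtain ⟨D, hDU, hD, hDE⟩ := hU
  obtain ⟨T, hTD, hT, hAT⟩ := hDE.symm.exists_clopen_copy_of_subset hD hA (subset_univ A)
  exact ⟨T, hTD.trans hDU, hT, hAT⟩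

theorem ContainsCopy.mono {U V : Set E} (hU : ContainsCopy F U) (hUV : U ⊆ V) :
    ContainsCopy F V :=
  let ⟨D, hDU, hD, hDE⟩ := hU
  ⟨D, hDU.trans hUV, hD, hDE⟩

end Copies

section Swap

variable {E : Type*} [TopologicalSpace E] {S T : Set E}

open Classical in
noncomputable def swapAlong (e : S ≃ₜ T) (x : E) : E :=
  if hx : x ∈ S then e ⟨x, hx⟩ else if hx' : x ∈ T then e.symm ⟨x, hx'⟩ else x

variable (e : S ≃ₜ T)

theorem swapAlong_of_mem_left (x : S) : swapAlong e x = e x := by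
  simp [swapAlong]

theorem swapAlong_of_mem_right (hST : Disjoint S T) (y : T) : swapAlong e y = e.symm y := by
  simp [swapAlong, disjoint_right.1 hST y.2]

theorem swapAlong_of_notMem {x : E} (hS : x ∉ S) (hT : x ∉ T) : swapAlong e x = x := by
  simp [swapAlong, hS, hT]

theorem swapAlong_involutive (hST : Disjoint S T) : Function.Involutive (swapAlong e) := by
  intro x
  by_cases hS : x ∈ S
  · lift x to S using hS
    rw [swapAlong_of_mem_left, swapAlong_of_mem_right e hST, Homeomorph.symm_apply_apply]
  by_cases hT : x ∈ T
  · lift x to T using hT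
    rw [swapAlong_of_mem_right e hST, swapAlong_of_mem_left, Homeomorph.apply_symm_apply]
  rw [swapAlong_of_notMem e hS hT, swapAlong_of_notMem e hS hT]

theorem continuous_swapAlong (hS : IsClopen S) (hT : IsClopen T) (hST : Disjoint S T) :
    Continuous (swapAlong e) := by
  have onS : ContinuousOn (swapAlong e) S := by
    rw [continuousOn_iff_continuous_domRestrict]
    convert continuous_subtype_val.comp e.continuous using 1
    ext x
    exact swapAlong_of_mem_left e x
  have onT : ContinuousOn (swapAlong e) T := by
    rw [continuousOn_iff_continuous_domRestrict]
    convert continuous_subtype_val.comp e.symm.continuous using 1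
    ext y
    exact swapAlong_of_mem_right e hST y
  have onRest : ContinuousOn (swapAlong e) (S ∪ T)ᶜ :=
    continuousOn_id.congr fun x hx => by
      simp only [mem_compl_iff, mem_union, not_or] at hx
      exact swapAlong_of_notMem e hx.1 hx.2
  refine continuous_iff_continuousAt.2 fun x => ?_
  by_cases hxS : x ∈ S
  · exact onS.continuousAt (hS.isOpen.mem_nhds hxS)
  by_cases hxT : x ∈ T
  · exact onT.continuousAt (hT.isOpen.mem_nhds hxT)
  exact onRest.continuousAt ((hS.union hT).isClosed.isOpen_compl.mem_nhds (by simp [hxS, hxT]))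

theorem exists_mem_endsHomeo_extending {F : Set E} (hS : IsClopen S) (hT : IsClopen T)
    (hST : Disjoint S T) (he : ∀ x, (e x : E) ∈ F ↔ (x : E) ∈ F) :
    ∃ σ ∈ EndsHomeo F, (∀ x : S, σ x = e x) ∧ ∀ x ∉ S ∪ T, σ x = x := by
  have hinv := swapAlong_involutive e hST
  have hcont := continuous_swapAlong e hS hT hST
  have hF : ∀ x, swapAlong e x ∈ F ↔ x ∈ F := by
    intro x
    by_cases hxS : x ∈ S
    · lift x to S using hxS
      rw [swapAlong_of_mem_left, he]
    by_cases hxT : x ∈ T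
    · lift x to T using hxT
      rw [swapAlong_of_mem_right e hST, ← he, Homeomorph.apply_symm_apply]
    rw [swapAlong_of_notMem e hxS hxT]
  refine ⟨hinv.toPerm _, ⟨hcont, hcont, hF⟩, swapAlong_of_mem_left e, fun x hx => ?_⟩
  simp only [mem_union, not_or] at hx
  exact swapAlong_of_notMem e hx.1 hx.2

end Swap

section SelfSimilar

variable {E : Type*} [TopologicalSpace E] {F : Set E}

theorem SelfSimilarPair.exists_containsCopy_of_partition (hss : SelfSimilarPair F) {ι : Type*}
    [Finite ι] (P : ι → Set E) (hP : ∀ i, IsClopen (P i))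
    (hdisj : Pairwise (Function.onFun Disjoint P)) (hcover : ⋃ i, P i = univ) :
    ∃ i, ContainsCopy F (P i) := by
  let s := {i | (P i).Nonempty}
  let r : Fin (Nat.card s) ≃ s := (Finite.equivFin s).symm
  obtain ⟨k, D, hD, hDP, hDE⟩ := hss _ (fun k => P (r k)) (fun k => hP _) (fun k => (r k).2)
    (fun k l hkl => hdisj (Subtype.val_injective.ne (r.injective.ne hkl)))
    (eq_univ_of_forall fun x => by
      obtain ⟨i, hi⟩ := mem_iUnion.1 (hcover ▸ mem_univ x)
      exact mem_iUnion.2 ⟨r.symm ⟨i, x, hi⟩, by rwa [Equiv.apply_symm_apply]⟩)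
  exact ⟨r k, D, hDP, hD, hDE⟩

theorem SelfSimilarPair.exists_containsCopy_of_cover (hss : SelfSimilarPair F) {n : ℕ}
    (U : Fin n → Set E) (hU : ∀ i, IsClopen (U i)) (hcover : ⋃ i, U i = univ) :
    ∃ i, ContainsCopy F (U i) := by
  have hclopen : ∀ i, IsClopen (disjointed U i) :=
    fun i => disjointedRec (fun _ j ht => ht.diff (hU j)) (hU i)
  obtain ⟨i, hi⟩ := hss.exists_containsCopy_of_partition _ hclopen (disjoint_disjointed U)
    (iUnion_disjointed.trans hcover)
  exact ⟨i, hi.mono (disjointed_subset U i)⟩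

def CopiesAccumulateAt (F : Set E) (x : E) : Prop :=
  ∀ U, IsClopen U → x ∈ U → ContainsCopy F U

theorem SelfSimilarPair.exists_copiesAccumulateAt [CompactSpace E] (hss : SelfSimilarPair F) :
    ∃ x, CopiesAccumulateAt F x := by
  by_contra! hbad
  simp only [CopiesAccumulateAt, not_forall] at hbad
  choose U hU hxU hUbad using hbad
  obtain ⟨t, ht⟩ := isCompact_univ.elim_finite_subcover U (fun x => (hU x).isOpen)
    fun x _ => mem_iUnion.2 ⟨x, hxU x⟩
  let r : Fin t.card ≃ t := t.equivFin.symm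
  obtain ⟨k, hk⟩ := hss.exists_containsCopy_of_cover (fun k => U (r k)) (fun k => hU _)
    (eq_univ_of_forall fun x => by
      obtain ⟨y, hy, hxy⟩ := mem_iUnion₂.1 (ht (mem_univ x))
      exact mem_iUnion.2 ⟨r.symm ⟨y, hy⟩, by simpa using hxy⟩)
  exact hUbad _ hk

theorem CopiesAccumulateAt.endsLE {x : E} (hx : CopiesAccumulateAt F x) (y : E) :
    EndsLE F y x := by
  intro U hU hxU
  obtain ⟨D, hDU, hD, hDE⟩ := hx U hU hxU
  exact ⟨D, hDU, hD, univ, isClopen_univ, mem_univ y, hDE.symm⟩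

theorem CopiesAccumulateAt.of_endsLE {x y : E} (hx : CopiesAccumulateAt F x)
    (hxy : EndsLE F x y) : CopiesAccumulateAt F y := by
  intro U hU hyU
  obtain ⟨D, hDU, hD, V, hV, hxV, hVD⟩ := hxy U hU hyU
  obtain ⟨C, hCV, hC, hCE⟩ := hx V hV hxV
  obtain ⟨T, hTD, hT, hCT⟩ := hVD.exists_clopen_copy_of_subset hD hC hCV
  exact ⟨T, hTD.trans hDU, hT, hCT.symm.trans hCE⟩

theorem UniformlySelfSimilar.copiesAccumulateAt [CompactSpace E] (huss : UniformlySelfSimilar F)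
    {m : E} (hm : m ∈ MaxSet F) : CopiesAccumulateAt F m := by
  obtain ⟨hss, ⟨x₀, hx₀⟩, -⟩ := huss
  obtain ⟨x, hx⟩ := hss.exists_copiesAccumulateAt
  have hxmax : x ∈ MaxSet F := fun y _ => hx.endsLE y
  rw [hx₀] at hxmax hm
  exact (hx.of_endsLE hxmax.2).of_endsLE hm.1

end SelfSimilar

section Cantor

theorem IsOpen.infinite_of_nonempty_cantor {O : Set (ℕ → Bool)} (hO : IsOpen O)
    (hne : O.Nonempty) : O.Infinite := by
  obtain ⟨f, hf⟩ := hne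
  let u : ℕ → ℕ → Bool := fun n => Function.update f n (!f n)
  have hu : Function.Injective u := by
    intro m n hmn
    by_contra hne'
    simpa [u, hne'] using congrFun hmn m
  have hlim : Filter.Tendsto u Filter.atTop (𝓝 f) :=
    tendsto_pi_nhds.2 fun k => tendsto_const_nhds.congr' <|
      Filter.eventually_atTop.2 ⟨k + 1, fun n hn => (Function.update_of_ne (by omega) _ _).symm⟩
  obtain ⟨N, hN⟩ := Filter.eventually_atTop.1 (hlim (hO.mem_nhds hf))
  exact infinite_of_injective_forall_mem (hu.comp (add_left_injective N))
    fun n => hN _ (Nat.le_add_left N n)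

theorem IsOpen.infinite_inter_of_homeomorph_cantor {E : Type*} [TopologicalSpace E]
    {M O : Set E} (e : M ≃ₜ (ℕ → Bool)) (hO : IsOpen O) (hne : (O ∩ M).Nonempty) :
    (O ∩ M).Infinite := by
  have hS : IsOpen (Subtype.val ⁻¹' O : Set M) := hO.preimage continuous_subtype_val
  obtain ⟨x, hxO, hxM⟩ := hne
  have himage : (e '' (Subtype.val ⁻¹' O)).Infinite := by
    rw [e.image_eq_preimage_symm]
    exact (hS.preimage e.symm.continuous).infinite_of_nonempty_cantor ⟨e ⟨x, hxM⟩, by simpa⟩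
  have := (himage.of_image _).image Subtype.val_injective.injOn
  rwa [Subtype.image_preimage_coe, inter_comm] at this

end Cantor

section Factorization

variable {E : Type*} [TopologicalSpace E] {F : Set E}

def IsConjSupportedOn (H : Set E) (c : EndsHomeo F) : Prop :=
  ∃ k a : EndsHomeo F, SupportedOn H (k : Equiv.Perm E) ∧ c = a * k * a⁻¹

theorem IsConjSupportedOn.mem_normalClosure {H : Set E} {c : EndsHomeo F}
    (hc : IsConjSupportedOn H c) :
    c ∈ Subgroup.normalClosure {h : EndsHomeo F | SupportedOn H (h : Equiv.Perm E)} := by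
  obtain ⟨k, a, hk, rfl⟩ := hc
  exact Subgroup.conjugatesOfSet_subset_normalClosure
    (Group.mem_conjugatesOfSet_iff.2 ⟨k, hk, isConj_iff.2 ⟨a, rfl⟩⟩)

theorem EndsHomeo.isConjSupportedOn_of_fixes {H U : Set E} (hH : IsClopen H) (hUH : U ⊆ H)
    (hU : ContainsCopy F U) (f : EndsHomeo F) (hf : ∀ x ∈ U, (f : Equiv.Perm E) x = x) :
    IsConjSupportedOn H f := by
  obtain ⟨T, hTU, hT, e, he⟩ := hU.exists_copy hH.compl
  obtain ⟨σ, hσ, hσe, -⟩ := exists_mem_endsHomeo_extending e hH.compl hT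
    (disjoint_compl_left.mono_right (hTU.trans hUH)) he
  let a : EndsHomeo F := ⟨σ, hσ⟩
  refine ⟨a⁻¹ * f * a, a, fun x hx => ?_, by group⟩
  have hfix : (f : Equiv.Perm E) (σ x) = σ x := by
    rw [hσe ⟨x, hx⟩]
    exact hf _ (hTU (e _).2)
  change σ⁻¹ ((f : Equiv.Perm E) (σ x)) = x
  rw [hfix]
  exact σ.symm_apply_apply x

theorem EndsHomeo.exists_eqOn_of_containsCopy {W P : Set E} (g : EndsHomeo F) (hW : IsClopen W)
    (hP : ContainsCopy F P) (hWP : Disjoint W P)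
    (hgWP : Disjoint ((g : Equiv.Perm E) '' W) P) :
    ∃ c : EndsHomeo F, (∀ x ∈ W, (c : Equiv.Perm E) x = (g : Equiv.Perm E) x) ∧
      ∀ x ∉ W ∪ P ∪ (g : Equiv.Perm E) '' W, (c : Equiv.Perm E) x = x := by
  obtain ⟨X, hXP, hX, e, he⟩ := hP.exists_copy hW
  let G : E ≃ₜ E := ⟨g.1, g.2.1, g.2.2.1⟩
  let e' : X ≃ₜ G '' W := e.symm.trans (G.image W)
  have he'e : ∀ x, (e' (e x) : E) = (g : Equiv.Perm E) x := fun x => by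
    change ((G.image W) (e.symm (e x)) : E) = _
    rw [Homeomorph.symm_apply_apply]
    rfl
  have he' : ∀ y, (e' y : E) ∈ F ↔ (y : E) ∈ F := fun y => by
    rw [← e.apply_symm_apply y, he'e, he]
    exact g.2.2.2 _
  have hgW : IsClopen (G '' W) := ⟨G.isClosed_image.2 hW.isClosed, G.isOpen_image.2 hW.isOpen⟩
  obtain ⟨s₁, hs₁, hs₁e, hs₁fix⟩ :=
    exists_mem_endsHomeo_extending e hW hX (hWP.mono_right hXP) he
  obtain ⟨s₂, hs₂, hs₂e, hs₂fix⟩ :=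
    exists_mem_endsHomeo_extending e' hX hgW (hgWP.mono_right hXP).symm he'
  refine ⟨⟨s₂, hs₂⟩ * ⟨s₁, hs₁⟩, fun x hx => ?_, fun x hx => ?_⟩
  · change s₂ (s₁ x) = _
    rw [hs₁e ⟨x, hx⟩, hs₂e (e ⟨x, hx⟩), he'e]
  · simp only [mem_union, not_or] at hx
    have hxX : x ∉ X := fun h => hx.1.2 (hXP h)
    change s₂ (s₁ x) = x
    rw [hs₁fix x (by rintro (h | h); exacts [hx.1.1 h, hxX h]),
      hs₂fix x (by rintro (h | h); exacts [hxX h, hx.2 h])]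

end Factorization

section HalfSpace

variable {E : Type*} [TopologicalSpace E] [CompactSpace E] [T2Space E]
  [TotallyDisconnectedSpace E] {F H : Set E}

theorem IsHalfSpace.exists_disjoint_copies_off_finite (huss : UniformlySelfSimilar F)
    (hH : IsHalfSpace F H) {s : Set E} (hs : s.Finite) :
    ∃ P₁ P₂ : Set E, IsClopen P₁ ∧ IsClopen P₂ ∧ P₁ ⊆ H \ s ∧ P₂ ⊆ H \ s ∧ Disjoint P₁ P₂ ∧
      ContainsCopy F P₁ ∧ ContainsCopy F P₂ := by
  obtain ⟨hHc, hHM, -⟩ := hH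
  have hinf : (H ∩ MaxSet F).Infinite :=
    hHc.isOpen.infinite_inter_of_homeomorph_cantor huss.2.2.some hHM
  obtain ⟨r₁, ⟨hr₁H, hr₁M⟩, hr₁s⟩ := (hinf.sdiff hs).nonempty
  obtain ⟨r₂, ⟨hr₂H, hr₂M⟩, hr₂s⟩ := (hinf.sdiff (hs.insert r₁)).nonempty
  rw [mem_insert_iff, not_or] at hr₂s
  obtain ⟨P₁, hP₁, hr₁P₁, hP₁H⟩ := compact_exists_isClopen_in_isOpen
    (hHc.isOpen.sdiff (hs.insert r₂).isClosed)
    (show r₁ ∈ H \ insert r₂ s by simp [hr₁H, hr₁s, Ne.symm hr₂s.1])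
  obtain ⟨P₂, hP₂, hr₂P₂, hP₂H⟩ := compact_exists_isClopen_in_isOpen
    (hHc.isOpen.sdiff (hs.isClosed.union hP₁.isClosed))
    (show r₂ ∈ H \ (s ∪ P₁) by simpa [hr₂H, hr₂s.2] using fun h => (hP₁H h).2 (mem_insert _ _))
  refine ⟨P₁, P₂, hP₁, hP₂, fun x hx => ⟨(hP₁H hx).1, fun h => (hP₁H hx).2 (.inr h)⟩,
    fun x hx => ⟨(hP₂H hx).1, fun h => (hP₂H hx).2 (.inl h)⟩,
    disjoint_right.2 fun x hx h => (hP₂H hx).2 (.inr h),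
    huss.copiesAccumulateAt hr₁M P₁ hP₁ hr₁P₁, huss.copiesAccumulateAt hr₂M P₂ hP₂ hr₂P₂⟩

theorem IsHalfSpace.exists_separated_copies (huss : UniformlySelfSimilar F)
    (hH : IsHalfSpace F H) {g : E → E} (hg : Continuous g) :
    ∃ W P₁ P₂ : Set E, IsClopen W ∧ W ⊆ H ∧ P₂ ⊆ H ∧
      ContainsCopy F W ∧ ContainsCopy F P₁ ∧ ContainsCopy F P₂ ∧
      Disjoint W P₁ ∧ Disjoint (g '' W) P₁ ∧ Disjoint P₂ (W ∪ P₁ ∪ g '' W) := by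
  obtain ⟨q, hqH, hqM⟩ := hH.2.1
  obtain ⟨P₁, P₂, hP₁, hP₂, hP₁H, hP₂H, hP₁₂, hP₁c, hP₂c⟩ :=
    hH.exists_disjoint_copies_off_finite huss (toFinite {q, g q})
  let W := (H \ (P₁ ∪ P₂)) ∩ g ⁻¹' (P₁ ∪ P₂)ᶜ
  have hW : IsClopen W := (hH.1.diff (hP₁.union hP₂)).inter ((hP₁.union hP₂).compl.preimage hg)
  have hqW : q ∈ W := by
    refine ⟨⟨hqH, ?_⟩, ?_⟩ <;> rintro (h | h)
    exacts [(hP₁H h).2 (mem_insert _ _), (hP₂H h).2 (mem_insert _ _),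
      (hP₁H h).2 (mem_insert_of_mem _ rfl), (hP₂H h).2 (mem_insert_of_mem _ rfl)]
  have hWP : Disjoint W (P₁ ∪ P₂) := subset_compl_iff_disjoint_right.1 fun x hx => hx.1.2
  have hgWP : Disjoint (g '' W) (P₁ ∪ P₂) :=
    subset_compl_iff_disjoint_right.1 (image_subset_iff.2 fun x hx => hx.2)
  refine ⟨W, P₁, P₂, hW, fun x hx => hx.1.1, fun x hx => (hP₂H hx).1,
    huss.copiesAccumulateAt hqM W hW hqW, hP₁c, hP₂c, hWP.mono_right subset_union_left,
    hgWP.mono_right subset_union_left, ?_⟩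
  exact disjoint_union_right.2 ⟨disjoint_union_right.2 ⟨(hWP.mono_right subset_union_right).symm,
    hP₁₂.symm⟩, (hgWP.mono_right subset_union_right).symm⟩

theorem IsHalfSpace.exists_isConjSupportedOn_mul_eq (huss : UniformlySelfSimilar F)
    (hH : IsHalfSpace F H) (g : EndsHomeo F) :
    ∃ c₁ c₂ : EndsHomeo F, IsConjSupportedOn H c₁ ∧ IsConjSupportedOn H c₂ ∧ c₁ * c₂ = g := by
  obtain ⟨W, P₁, P₂, hW, hWH, hP₂H, hWc, hP₁c, hP₂c, hWP₁, hgWP₁, hP₂⟩ :=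
    hH.exists_separated_copies huss g.2.1
  obtain ⟨c, hcg, hcfix⟩ := EndsHomeo.exists_eqOn_of_containsCopy g hW hP₁c hWP₁ hgWP₁
  refine ⟨c, c⁻¹ * g, ?_, ?_, mul_inv_cancel_left c g⟩
  · exact EndsHomeo.isConjSupportedOn_of_fixes hH.1 hP₂H hP₂c c
      fun x hx => hcfix x (disjoint_left.1 hP₂ hx)
  · refine EndsHomeo.isConjSupportedOn_of_fixes hH.1 hWH hWc _ fun x hx => ?_
    change (c : Equiv.Perm E)⁻¹ ((g : Equiv.Perm E) x) = x
    rw [← hcg x hx]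
    exact Equiv.symm_apply_apply _ x

end HalfSpace

variable {E : Type*} [TopologicalSpace E] [Nonempty E] [CompactSpace E]
  [TopologicalSpace.MetrizableSpace E] [TotallyDisconnectedSpace E]

theorem endsHomeo_normal_closure_of_halfspace_supported_general
    (F : Set E) (huss : UniformlySelfSimilar F)
    (H : Set E) (hH : IsHalfSpace F H) :
    Subgroup.normalClosure {h : ↥(EndsHomeo F) | SupportedOn H (h : Equiv.Perm E)} = ⊤ ∧
    ∀ g : ↥(EndsHomeo F), ∃ l : List ↥(EndsHomeo F), l.length ≤ 3 ∧
      (∀ c ∈ l, ∃ k a : ↥(EndsHomeo F), SupportedOn H (k : Equiv.Perm E) ∧ c = a * k * a⁻¹) ∧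
      l.prod = g := by
  have factor : ∀ g : EndsHomeo F, ∃ l : List (EndsHomeo F), l.length ≤ 3 ∧
      (∀ c ∈ l, IsConjSupportedOn H c) ∧ l.prod = g := fun g => by
    obtain ⟨c₁, c₂, h₁, h₂, rfl⟩ := hH.exists_isConjSupportedOn_mul_eq huss g
    exact ⟨[c₁, c₂], by simp, by simp [h₁, h₂], by simp⟩
  refine ⟨(Subgroup.eq_top_iff' _).2 fun g => ?_, factor⟩
  obtain ⟨l, -, hl, rfl⟩ := factor g
  exact Subgroup.list_prod_mem _ fun c hc => (hl c hc).mem_normalClosure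

theorem endsHomeo_normal_closure_of_halfspace_supported
    (F : Set E) (hF : IsClosed F) (huss : UniformlySelfSimilar F)
    (H : Set E) (hH : IsHalfSpace F H) :
    Subgroup.normalClosure {h : ↥(EndsHomeo F) | SupportedOn H (h : Equiv.Perm E)} = ⊤ ∧
    ∀ g : ↥(EndsHomeo F), ∃ l : List ↥(EndsHomeo F), l.length ≤ 3 ∧
      (∀ c ∈ l, ∃ k a : ↥(EndsHomeo F), SupportedOn H (k : Equiv.Perm E) ∧ c = a * k * a⁻¹) ∧
      l.prod = g :=
  endsHomeo_normal_closure_of_halfspace_supported_general F huss H hH
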